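/- Let m ≥ 1, q ≥ 0, n = q + 1, and c = 2π/m; write S¹ = ℝ/2πℤ, B = ℝ/cℤ, and π : S¹ → B the natural projection. Let X(n) be the subspace of (S¹)^n × [0, c]^n of tuples ((ζ_j)_j, (φ_j)_j) with π(ζ_{j+1 mod n}) = π(ζ_j) + φ̄_j for all j and φ_0 + … + φ_{n−1} = c. Let Λ = AddCircle ((m : ℝ)) × Δ with Δ the standard q-simplex, and τ : Λ → Λ the homeomorphism τ(r̄, t) = (r̄ − t̄_q, (t_q, t_0, …, t_{q−1})). Let W = (Fin n → ZMod m) ⋊ Z_n, where Z_n = ⟨σ_0⟩ ⊆ Perm(Fin n) is generated by the cyclic permutation σ_0 : i ↦ i+1 (mod n), act on X(n) by: v : Fin n → ZMod m acts by (ζ_j)_j ↦ (ζ_j + (c·ṽ(j))‾)_j (ṽ any integer lift, well defined since c·m = 2π) fixing the φ_j, and σ_0 acts by ((ζ_j)_j, (φ_j)_j) ↦ ((ζ_{j−1 mod n})_j, (φ_{j−1 mod n})_j); set υ = (v_0, σ_0) ∈ W with v_0(0) = −1 and v_0(i) = 0 for i ≠ 0. Define Φ : Λ → X(n) by Φ(r̄,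 t) = ((ζ_j)_j, (φ_j)_j) with ζ_j = ((2π/m)·(r + t_0 + … + t_{j−1}))‾ and φ_j = (2π/m)·t_j. Then: (i) Φ is well defined, continuous, and injective; (ii) Φ ∘ τ = υ · Φ, i.e. Φ intertwines τ with the action of υ; (iii) the map Λ × W → X(n), (λ, w) ↦ w·Φ(λ), descends to a homeomorphism from the balanced product (Λ × W)/∼ to X(n), where ∼ is generated by (λ, w) ∼ (τ(λ), w·υ⁻¹) (an action of ℤ/(m·n), since τ^{mn} = id and υ^{mn} = 1); moreover this homeomorphism is equivariant for the left W-actions (W acting on the quotient by w′·[(λ, w)] = [(λ, w′·w)]) and intertwines translation by a ∈ ℝ in the AddCircle m coordinate of Λ with simultaneous translation of all ζ_j by ((2π/m)·a)‾. -/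

import Mathlib

noncomputable section

open Set Equiv

namespace Stmt14

/-- The additive circle `S¹ = ℝ/2πℤ`. -/
abbrev S1 : Type := AddCircle (2 * Real.pi)

/-- The additive circle `B = ℝ/(2π/m)ℤ`, modeling `S¹/C_m`. -/
abbrev CircB (m : ℕ) : Type := AddCircle (2 * Real.pi / m)

/-- The space `X(n)` of tuples `((ζ_j)_j, (φ_j)_j)` with `φ_j ∈ [0, c]`,
`π(ζ_{j+1}) = π(ζ_j) + φ̄_j`, and `φ_0 + … + φ_{n−1} = c` (where `c = 2π/m`). -/
def Xn (m n : ℕ) [NeZero n] (pr : S1 → CircB m) :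
    Set ((Fin n → S1) × (Fin n → ℝ)) :=
  {x | (∀ j, x.2 j ∈ Icc 0 (2 * Real.pi / m)) ∧
    (∀ j, pr (x.1 (j + 1)) = pr (x.1 j) + ((x.2 j : ℝ) : CircB m)) ∧
    ∑ j, x.2 j = 2 * Real.pi / m}

/-- `Λ = AddCircle m × Δ_q`, where `Δ_q` is the standard `q`-simplex. -/
def Lam (m q : ℕ) : Set (AddCircle (m : ℝ) × (Fin (q + 1) → ℝ)) :=
  {p | (∀ j, 0 ≤ p.2 j) ∧ ∑ j, p.2 j = 1}

/-- The ambient twist map `τ(r̄, t) = (r̄ − t̄_q, (t_q, t_0, …, t_{q−1}))`. -/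
def tauMap (m q : ℕ) :
    AddCircle (m : ℝ) × (Fin (q + 1) → ℝ) → AddCircle (m : ℝ) × (Fin (q + 1) → ℝ) :=
  fun p => (p.1 - ((p.2 (Fin.last q) : ℝ) : AddCircle (m : ℝ)), fun j => p.2 (j - 1))

/-- The homomorphism `Perm (Fin n) →* MulAut (Fin n → Multiplicative (ZMod m))` by which
a permutation `σ` acts on a function `v` via `(σ · v)(i) = v (σ⁻¹ i)`. -/
def permHom (m n : ℕ) : Perm (Fin n) →* MulAut (Fin n → Multiplicative (ZMod m)) where
  toFun σ :=
    { toFun := fun v i => v (σ⁻¹ i)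
      invFun := fun v i => v (σ i)
      left_inv := fun v => funext fun i => by simp
      right_inv := fun v => funext fun i => by simp
      map_mul' := fun v w => rfl }
  map_one' := by
    ext v i
    simp
  map_mul' := fun σ τ => by
    ext v i
    simp [mul_inv_rev]

/-- The wreath product `W = (Fin n → ZMod m) ⋊ Z_n`, where `Z_n = ⟨σ₀⟩ ≤ Σ_n` is the
cyclic group generated by `σ₀ : i ↦ i + 1`. -/
abbrev Wgrp (m q : ℕ) : Type :=
  SemidirectProduct (Fin (q + 1) → Multiplicative (ZMod m))
    ↥(Subgroup.zpowers (finRotate (q + 1)))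
    ((permHom m (q + 1)).comp (Subgroup.subtype _))

instance (m q : ℕ) : TopologicalSpace (Wgrp m q) := ⊥

/-- The action of `w = (v, σ) ∈ W` on `X(n)`: first reindex by the cyclic permutation
`σ` (i.e. `ζ'_j = ζ_{σ⁻¹ j}`, `φ'_j = φ_{σ⁻¹ j}`), then translate each `ζ'_j` by
`(c · ṽ(j))‾` (`ṽ` an integer lift of `v`, well defined since `c·m = 2π`). -/
def wAct (m q : ℕ) (w : Wgrp m q) (x : (Fin (q + 1) → S1) × (Fin (q + 1) → ℝ)) :
    (Fin (q + 1) → S1) × (Fin (q + 1) → ℝ) :=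
  (fun j => x.1 (((w.right : Perm (Fin (q + 1))))⁻¹ j) +
      ((2 * Real.pi / m * ((Multiplicative.toAdd (w.left j)).val : ℝ) : ℝ) : S1),
    fun j => x.2 (((w.right : Perm (Fin (q + 1))))⁻¹ j))

/-- The element `υ = (v₀, σ₀)` with `v₀(0) = −1` and `v₀(i) = 0` for `i ≠ 0`. -/
def upsilon (m q : ℕ) : Wgrp m q :=
  ⟨fun i => Multiplicative.ofAdd (if i = 0 then (-1 : ZMod m) else 0),
    ⟨finRotate (q + 1), Subgroup.mem_zpowers _⟩⟩

/-- The comparison map `Φ(r̄, t) = ((ζ_j)_j, (φ_j)_j)` with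
`ζ_j = ((2π/m)·(r + t_0 + … + t_{j−1}))‾` and `φ_j = (2π/m)·t_j`, expressed using the
map `scale : ℝ/mℤ → ℝ/2πℤ` induced by multiplication by `2π/m`. -/
def PhiMap (m q : ℕ) (scale : AddCircle (m : ℝ) → S1)
    (p : AddCircle (m : ℝ) × (Fin (q + 1) → ℝ)) :
    (Fin (q + 1) → S1) × (Fin (q + 1) → ℝ) :=
  (fun j => scale p.1 + ((2 * Real.pi / m * ∑ i ∈ Finset.Iio j, p.2 i : ℝ) : S1),
    fun j => 2 * Real.pi / m * p.2 j)

/-- The relation defining the balanced product `Λ ×_{C_{m(q+1)}} W`: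
`(λ, w) ∼ (τ(λ), w·υ⁻¹)`. -/
def balRel (m q : ℕ) :
    (↥(Lam m q) × Wgrp m q) → (↥(Lam m q) × Wgrp m q) → Prop :=
  fun p p' => (p'.1 : AddCircle (m : ℝ) × (Fin (q + 1) → ℝ)) = tauMap m q p.1.val ∧
    p'.2 = p.2 * (upsilon m q)⁻¹


/-!
`Φ` is injective since `ζ₀` and the `φ_j` recover `(r̄, t)`, and `Φ ∘ τ = υ · Φ` is a direct
computation. The crux of injectivity on the balanced product: if `g · Φ(λ) = Φ(λ')` then `g` is
a power of `υ`. Indeed, the permutation part of `g` is some `σ₀ᵃ`, so `g υ⁻ᵃ` has trivial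
permutation part and moves `Φ(τᵃ λ)` to `Φ(λ')`; comparing `ζ`-coordinates, its translation
part is then constant, and constant translations are the powers of `υ^(q+1) = (−1, …, −1)`.
Hence `w · Φ(λ) = w' · Φ(λ')` forces `(λ', w') = (τᵏ λ, w υ⁻ᵏ)`. For surjectivity, the `φ_j`
and `ζ₀` of a point of `X(n)` determine `(r̄, t)`, and the remaining `ζ_j` agree with those of
`Φ(r̄, t)` up to `C_m`, which is the translation part of `w`. A continuous bijection from the
compact balanced product to the Hausdorff space `X(n)` is a homeomorphism.
-/

end Stmt14

theorem two_pi_div_pos (m : ℕ) [NeZero m] : 0 < 2 * Real.pi / m := by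
  have : (0 : ℝ) < m := Nat.cast_pos.mpr (NeZero.pos m)
  positivity

namespace Fin

variable {M : Type*} [AddCommMonoid M] {q : ℕ}

theorem Iio_succ_eq_Iic_castSucc (i : Fin q) : Finset.Iio i.succ = Finset.Iic i.castSucc := by
  ext k
  simp [Fin.lt_def, Fin.le_def]

theorem sum_Iio_succ_eq_sum_Iio_castSucc_add (f : Fin (q + 1) → M) (i : Fin q) :
    ∑ k ∈ Finset.Iio i.succ, f k = ∑ k ∈ Finset.Iio i.castSucc, f k + f i.castSucc := by
  rw [Fin.Iio_succ_eq_Iic_castSucc, Finset.sum_Iio_add_eq_sum_Iic]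

theorem sum_Iio_succ (f : Fin (q + 1) → M) (i : Fin q) :
    ∑ k ∈ Finset.Iio i.succ, f k = f 0 + ∑ k ∈ Finset.Iio i, f k.succ := by
  have : Finset.Iio i.succ = Finset.cons 0 ((Finset.Iio i).map (Fin.succEmb q)) (by simp) := by
    ext k
    cases k using Fin.cases <;> simp [Fin.succ_lt_succ_iff]
  rw [this, Finset.sum_cons, Finset.sum_map]
  rfl

theorem sum_Iio_last_add (f : Fin (q + 1) → M) :
    ∑ k ∈ Finset.Iio (Fin.last q), f k + f (Fin.last q) = ∑ k, f k := by
  rw [Finset.sum_Iio_add_eq_sum_Iic, ← Fin.top_eq_last, Finset.Iic_top]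

theorem sum_Iio_zero (f : Fin (q + 1) → M) : ∑ k ∈ Finset.Iio 0, f k = 0 := by
  rw [← bot_eq_zero, Finset.Iio_bot, Finset.sum_empty]

theorem zero_sub_one_eq_last : (0 : Fin (q + 1)) - 1 = Fin.last q := by
  rw [zero_sub]
  exact Fin.ext Fin.coe_neg_one

end Fin

open scoped Fin.NatCast

theorem finRotate_pow_apply {q : ℕ} (k : ℕ) (j : Fin (q + 1)) :
    (finRotate (q + 1) ^ k) j = j + k := by
  induction k with
  | zero => simp
  | succ k ih =>
    rw [pow_succ', Perm.mul_apply, ih, finRotate_apply, Nat.cast_succ, add_assoc]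

theorem finRotate_pow_self {q : ℕ} : finRotate (q + 1) ^ (q + 1) = 1 := by
  ext j
  simp [finRotate_pow_apply]

theorem apply_add_one_of_mem_zpowers {q : ℕ} {σ : Perm (Fin (q + 1))}
    (hσ : σ ∈ Subgroup.zpowers (finRotate (q + 1))) (j : Fin (q + 1)) :
    σ (j + 1) = σ j + 1 := by
  obtain ⟨k, rfl⟩ := hσ
  simpa [finRotate_apply] using
    congrArg (· j) ((Commute.refl (finRotate (q + 1))).zpow_left k).eq

namespace Stmt14

section Rotation

variable (m : ℕ) [NeZero m]

def rotation : ZMod m →+ S1 :=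
  (AddCircle.equivAddCircle 1 (2 * Real.pi) one_ne_zero Real.two_pi_pos.ne').toAddMonoidHom.comp
    ZMod.toAddCircle

theorem rotation_injective : Function.Injective (rotation m) :=
  (AddCircle.equivAddCircle _ _ _ _).injective.comp (ZMod.toAddCircle_injective m)

theorem rotation_intCast (z : ℤ) : rotation m z = ((2 * Real.pi / m * z : ℝ) : S1) := by
  simp only [rotation, AddMonoidHom.coe_comp, Function.comp_apply, ZMod.toAddCircle_intCast,
    AddEquiv.coe_toAddMonoidHom, AddCircle.equivAddCircle_apply_mk]
  congr 1
  ring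

theorem rotation_apply (a : ZMod m) :
    rotation m a = ((2 * Real.pi / m * a.val : ℝ) : S1) := by
  simpa using rotation_intCast m a.val

end Rotation

section Circles

variable {m : ℕ}

theorem scale_eq_equivAddCircle [NeZero m] {scale : AddCircle (m : ℝ) → S1}
    (hscale : ∀ r : ℝ, scale (r : AddCircle (m : ℝ)) = ((2 * Real.pi / m * r : ℝ) : S1)) :
    scale = AddCircle.equivAddCircle (m : ℝ) (2 * Real.pi) (NeZero.ne _) Real.two_pi_pos.ne' := by
  funext ρ
  induction ρ using QuotientAddGroup.induction_on with
  | H r =>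
    rw [hscale, AddCircle.equivAddCircle_apply_mk]
    congr 1
    ring

theorem pr_add_coe {pr : S1 → CircB m} (hpr : ∀ s : ℝ, pr (s : S1) = (s : CircB m))
    (s : S1) (u : ℝ) : pr (s + u) = pr s + u := by
  induction s using QuotientAddGroup.induction_on with
  | H r => rw [← AddCircle.coe_add, hpr, hpr, AddCircle.coe_add]

theorem pr_add_rotation [NeZero m] {pr : S1 → CircB m}
    (hpr : ∀ s : ℝ, pr (s : S1) = (s : CircB m)) (s : S1) (a : ZMod m) :
    pr (s + rotation m a) = pr s := by
  rw [rotation_apply, pr_add_coe hpr, ← nsmul_eq_mul', AddCircle.coe_nsmul,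
    AddCircle.coe_period, smul_zero, add_zero]

theorem exists_eq_add_rotation_of_pr_eq [NeZero m] {pr : S1 → CircB m}
    (hpr : ∀ s : ℝ, pr (s : S1) = (s : CircB m)) {s s' : S1} (h : pr s = pr s') :
    ∃ a : ZMod m, s = s' + rotation m a := by
  induction s using QuotientAddGroup.induction_on with | H x =>
  induction s' using QuotientAddGroup.induction_on with | H y =>
  rw [hpr, hpr, ← sub_eq_zero, ← AddCircle.coe_sub, AddCircle.coe_eq_zero_iff] at h
  obtain ⟨z, hz⟩ := h
  refine ⟨z, ?_⟩
  rw [rotation_intCast, ← AddCircle.coe_add]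
  congr 1
  rw [zsmul_eq_mul] at hz
  linarith

theorem pr_eq_of_mem_Xn {q : ℕ} {pr : S1 → CircB m}
    {x y : (Fin (q + 1) → S1) × (Fin (q + 1) → ℝ)} (hx : x ∈ Xn m (q + 1) pr)
    (hy : y ∈ Xn m (q + 1) pr) (h2 : x.2 = y.2) (h0 : pr (x.1 0) = pr (y.1 0))
    (j : Fin (q + 1)) :
    pr (x.1 j) = pr (y.1 j) := by
  induction j using Fin.induction with
  | zero => exact h0
  | succ i ih => rw [← Fin.coeSucc_eq_succ, hx.2.1, hy.2.1, ih, h2]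

end Circles

section Action

variable {m q : ℕ}

theorem wAct_fst [NeZero m] (w : Wgrp m q) (x : (Fin (q + 1) → S1) × (Fin (q + 1) → ℝ))
    (j : Fin (q + 1)) :
    (wAct m q w x).1 j =
      x.1 ((w.right : Perm (Fin (q + 1)))⁻¹ j) +
        rotation m (Multiplicative.toAdd (w.left j)) := by
  rw [rotation_apply]
  rfl

theorem wAct_snd (w : Wgrp m q) (x : (Fin (q + 1) → S1) × (Fin (q + 1) → ℝ))
    (j : Fin (q + 1)) :
    (wAct m q w x).2 j = x.2 ((w.right : Perm (Fin (q + 1)))⁻¹ j) := rfl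

theorem wAct_one [NeZero m] (x : (Fin (q + 1) → S1) × (Fin (q + 1) → ℝ)) :
    wAct m q 1 x = x :=
  Prod.ext (funext fun j => by simp [wAct_fst]) rfl

theorem wAct_mul [NeZero m] (w w' : Wgrp m q) (x : (Fin (q + 1) → S1) × (Fin (q + 1) → ℝ)) :
    wAct m q (w * w') x = wAct m q w (wAct m q w' x) := by
  refine Prod.ext (funext fun j => ?_) rfl
  simp only [wAct_fst, SemidirectProduct.mul_left, SemidirectProduct.mul_right, Subgroup.coe_mul,
    mul_inv_rev, Perm.mul_apply, Pi.mul_apply, toAdd_mul, map_add]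
  rw [add_assoc, add_comm (rotation m _)]
  rfl

theorem continuous_wAct (w : Wgrp m q) : Continuous (wAct m q w) := by
  unfold wAct
  fun_prop

theorem wAct_add_const (w : Wgrp m q) (x : (Fin (q + 1) → S1) × (Fin (q + 1) → ℝ)) (s : S1) :
    wAct m q w (fun j => x.1 j + s, x.2) = (fun j => (wAct m q w x).1 j + s, (wAct m q w x).2) := by
  refine Prod.ext (funext fun j => ?_) rfl
  exact add_right_comm _ _ _

theorem wAct_mem [NeZero m] {pr : S1 → CircB m}
    (hpr : ∀ s : ℝ, pr (s : S1) = (s : CircB m)) (w : Wgrp m q)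
    {x : (Fin (q + 1) → S1) × (Fin (q + 1) → ℝ)} (hx : x ∈ Xn m (q + 1) pr) :
    wAct m q w x ∈ Xn m (q + 1) pr := by
  obtain ⟨hx0, hx1, hx2⟩ := hx
  refine ⟨fun j => hx0 _, fun j => ?_, ?_⟩
  · rw [wAct_fst, wAct_fst, wAct_snd, pr_add_rotation hpr, pr_add_rotation hpr,
      apply_add_one_of_mem_zpowers (Subgroup.inv_mem _ w.right.2), hx1]
  · rw [← hx2]
    exact Equiv.sum_comp (w.right : Perm (Fin (q + 1)))⁻¹ x.2

end Action

section Upsilon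

variable {m q : ℕ}

theorem upsilon_left :
    (upsilon m q).left = Pi.mulSingle (0 : Fin (q + 1)) (Multiplicative.ofAdd (-1 : ZMod m)) := by
  funext i
  by_cases hi : i = 0 <;> simp [upsilon, hi]

theorem upsilon_pow_right (k : ℕ) :
    ((upsilon m q ^ k).right : Perm (Fin (q + 1))) = finRotate (q + 1) ^ k := by
  induction k with
  | zero => rfl
  | succ k ih =>
    rw [pow_succ, pow_succ, SemidirectProduct.mul_right, Subgroup.coe_mul, ih]
    rfl

theorem upsilon_pow_left (k : ℕ) :
    (upsilon m q ^ k).left =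
      ∏ s ∈ Finset.range k,
        Pi.mulSingle (s : Fin (q + 1)) (Multiplicative.ofAdd (-1 : ZMod m)) := by
  induction k with
  | zero => rfl
  | succ k ih =>
    rw [pow_succ, SemidirectProduct.mul_left, ih, Finset.prod_range_succ, upsilon_left]
    congr 1
    -- `σ` acts on `Fin (q + 1) → Multiplicative (ZMod m)` by `v ↦ v ∘ σ⁻¹`
    show Pi.mulSingle 0 _ ∘ ((upsilon m q ^ k).right : Perm (Fin (q + 1))).symm = _
    rw [Pi.mulSingle_comp_equiv, Equiv.symm_symm, upsilon_pow_right, finRotate_pow_apply,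
      zero_add]

theorem upsilon_pow_succ_self :
    upsilon m q ^ (q + 1) =
      SemidirectProduct.inl (fun _ => Multiplicative.ofAdd (-1 : ZMod m)) := by
  refine SemidirectProduct.ext ?_ (Subtype.ext ?_)
  · rw [upsilon_pow_left, SemidirectProduct.left_inl,
      ← Fin.prod_univ_eq_prod_range (fun s => Pi.mulSingle (s : Fin (q + 1)) _)]
    simp only [Fin.cast_val_eq_self]
    exact Finset.univ_prod_mulSingle _
  · rw [upsilon_pow_right, finRotate_pow_self]
    rfl

theorem upsilon_pow_mul_succ_self (n : ℕ) :
    upsilon m q ^ ((q + 1) * n) =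
      SemidirectProduct.inl (fun _ => Multiplicative.ofAdd (-(n : ZMod m))) := by
  rw [pow_mul, upsilon_pow_succ_self, ← map_pow]
  congr 1
  funext
  simp [← ofAdd_nsmul]

end Upsilon

section Phi

variable {m q : ℕ} {scale : AddCircle (m : ℝ) → S1}

theorem le_one_of_mem_Lam {p : AddCircle (m : ℝ) × (Fin (q + 1) → ℝ)} (hp : p ∈ Lam m q)
    (j : Fin (q + 1)) : p.2 j ≤ 1 :=
  hp.2 ▸ Finset.single_le_sum (fun i _ => hp.1 i) (Finset.mem_univ j)

theorem phiMap_fst_coe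
    (hscale : ∀ r : ℝ, scale (r : AddCircle (m : ℝ)) = ((2 * Real.pi / m * r : ℝ) : S1))
    (r : ℝ) (t : Fin (q + 1) → ℝ) (j : Fin (q + 1)) :
    (PhiMap m q scale (r, t)).1 j =
      ((2 * Real.pi / m * (r + ∑ i ∈ Finset.Iio j, t i) : ℝ) : S1) := by
  show scale _ + _ = _
  rw [hscale, ← AddCircle.coe_add, mul_add]

theorem continuous_phiMap [NeZero m]
    (hscale : ∀ r : ℝ, scale (r : AddCircle (m : ℝ)) = ((2 * Real.pi / m * r : ℝ) : S1)) :
    Continuous (PhiMap m q scale) := by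
  have hcont : Continuous scale := by
    rw [scale_eq_equivAddCircle hscale]
    exact (AddCircle.homeomorphAddCircle _ _ _ _).continuous
  unfold PhiMap
  fun_prop

theorem phiMap_injective [NeZero m]
    (hscale : ∀ r : ℝ, scale (r : AddCircle (m : ℝ)) = ((2 * Real.pi / m * r : ℝ) : S1)) :
    Function.Injective (PhiMap m q scale) := by
  intro p p' h
  have ht : p.2 = p'.2 := funext fun j =>
    mul_left_cancel₀ (two_pi_div_pos m).ne' (congrFun (congrArg Prod.snd h) j)
  have hscale0 : scale p.1 = scale p'.1 := by
    simpa [PhiMap, ht] using congrFun (congrArg Prod.fst h) 0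
  rw [scale_eq_equivAddCircle hscale] at hscale0
  exact Prod.ext ((AddCircle.equivAddCircle _ _ _ _).injective hscale0) ht

theorem mapsTo_phiMap [NeZero m] {pr : S1 → CircB m}
    (hpr : ∀ s : ℝ, pr (s : S1) = (s : CircB m))
    (hscale : ∀ r : ℝ, scale (r : AddCircle (m : ℝ)) = ((2 * Real.pi / m * r : ℝ) : S1)) :
    MapsTo (PhiMap m q scale) (Lam m q) (Xn m (q + 1) pr) := by
  rintro ⟨ρ, t⟩ hp
  induction ρ using QuotientAddGroup.induction_on with | H r =>
  have hc := two_pi_div_pos m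
  refine ⟨fun j => ⟨mul_nonneg hc.le (hp.1 j),
    mul_le_of_le_one_right hc.le (le_one_of_mem_Lam hp j)⟩, fun j => ?_, ?_⟩
  · rw [phiMap_fst_coe hscale, phiMap_fst_coe hscale, hpr, hpr, ← AddCircle.coe_add]
    show _ = ((_ + 2 * Real.pi / m * t j : ℝ) : CircB m)
    cases j using Fin.lastCases with
    | last =>
      have hsum := Fin.sum_Iio_last_add t
      rw [hp.2] at hsum
      rw [Fin.last_add_one, Fin.sum_Iio_zero, add_zero, ← mul_add, add_assoc, hsum, mul_add,
        mul_one, AddCircle.coe_add, AddCircle.coe_period, add_zero]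
    | cast i =>
      rw [Fin.coeSucc_eq_succ, Fin.sum_Iio_succ_eq_sum_Iio_castSucc_add]
      ring_nf
  · exact (Finset.mul_sum _ _ _).symm.trans (by rw [hp.2, mul_one])

theorem mapsTo_tauMap : MapsTo (tauMap m q) (Lam m q) (Lam m q) := fun p hp =>
  ⟨fun _ => hp.1 _, (Equiv.sum_comp (Equiv.subRight 1) p.2).trans hp.2⟩

theorem phiMap_tauMap [NeZero m]
    (hscale : ∀ r : ℝ, scale (r : AddCircle (m : ℝ)) = ((2 * Real.pi / m * r : ℝ) : S1))
    {p : AddCircle (m : ℝ) × (Fin (q + 1) → ℝ)} (hp : p ∈ Lam m q) :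
    PhiMap m q scale (tauMap m q p) = wAct m q (upsilon m q) (PhiMap m q scale p) := by
  obtain ⟨ρ, t⟩ := p
  induction ρ using QuotientAddGroup.induction_on with | H r =>
  have htau : tauMap m q (r, t) =
      (((r - t (Fin.last q) : ℝ) : AddCircle (m : ℝ)), fun i => t (i - 1)) := by
    rw [AddCircle.coe_sub]
    rfl
  have hinv : ((upsilon m q).right : Perm (Fin (q + 1)))⁻¹ = (finRotate (q + 1)).symm := rfl
  refine Prod.ext (funext fun j => ?_) (funext fun j => ?_)
  · rw [htau, phiMap_fst_coe hscale, wAct_fst, hinv, finRotate_symm_apply,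
      phiMap_fst_coe hscale, upsilon_left]
    cases j using Fin.cases with
    | zero =>
      have hsum := Fin.sum_Iio_last_add t
      rw [hp.2] at hsum
      have hrot : rotation m (-1) = ((2 * Real.pi / m * (-1) : ℝ) : S1) := by
        simpa using rotation_intCast m (-1)
      rw [Pi.mulSingle_eq_same, toAdd_ofAdd, hrot, ← AddCircle.coe_add, Fin.sum_Iio_zero,
        Fin.zero_sub_one_eq_last]
      congr 1
      linear_combination -(2 * Real.pi / m) * hsum
    | succ i =>
      rw [Pi.mulSingle_eq_of_ne (Fin.succ_ne_zero i), toAdd_one, map_zero, add_zero,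
        Fin.sum_Iio_succ, Fin.zero_sub_one_eq_last]
      simp_rw [← Fin.coeSucc_eq_succ, add_sub_cancel_right, Fin.sum_Iio_castSucc]
      ring_nf
  · rw [htau, wAct_snd, hinv, finRotate_symm_apply]
    rfl

theorem phiMap_add_coe
    (hscale : ∀ r : ℝ, scale (r : AddCircle (m : ℝ)) = ((2 * Real.pi / m * r : ℝ) : S1))
    (p : AddCircle (m : ℝ) × (Fin (q + 1) → ℝ)) (a : ℝ) :
    PhiMap m q scale (p.1 + a, p.2) =
      (fun j => (PhiMap m q scale p).1 j + ((2 * Real.pi / m * a : ℝ) : S1),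
        (PhiMap m q scale p).2) := by
  obtain ⟨ρ, t⟩ := p
  induction ρ using QuotientAddGroup.induction_on with | H r =>
  refine Prod.ext (funext fun j => ?_) rfl
  show _ = (PhiMap m q scale _).1 j + _
  rw [← AddCircle.coe_add, phiMap_fst_coe hscale, phiMap_fst_coe hscale, ← AddCircle.coe_add]
  ring_nf

theorem phiMap_iterate_tauMap [NeZero m]
    (hscale : ∀ r : ℝ, scale (r : AddCircle (m : ℝ)) = ((2 * Real.pi / m * r : ℝ) : S1))
    {p : AddCircle (m : ℝ) × (Fin (q + 1) → ℝ)} (hp : p ∈ Lam m q) (k : ℕ) :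
    PhiMap m q scale ((tauMap m q)^[k] p) = wAct m q (upsilon m q ^ k) (PhiMap m q scale p) := by
  induction k generalizing p with
  | zero => exact (wAct_one _).symm
  | succ k ih =>
    rw [Function.iterate_succ_apply, ih (mapsTo_tauMap hp), phiMap_tauMap hscale hp, pow_succ,
      wAct_mul]

theorem eq_inl_of_wAct_phiMap_eq [NeZero m] {g : Wgrp m q} (hg : g.right = 1)
    {p p' : AddCircle (m : ℝ) × (Fin (q + 1) → ℝ)}
    (h : wAct m q g (PhiMap m q scale p) = PhiMap m q scale p') :
    ∃ a : ZMod m, g = SemidirectProduct.inl (fun _ => Multiplicative.ofAdd a) := by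
  have hσ : (g.right : Perm (Fin (q + 1)))⁻¹ = 1 := by rw [hg]; rfl
  have ht : p.2 = p'.2 := funext fun j => by
    have hj := congrArg (·.2 j) h
    simp only [wAct_snd, hσ, Perm.one_apply] at hj
    exact mul_left_cancel₀ (two_pi_div_pos m).ne' hj
  have hrot (j : Fin (q + 1)) :
      rotation m (Multiplicative.toAdd (g.left j)) = scale p'.1 - scale p.1 := by
    have hj := congrArg (·.1 j) h
    simp only [wAct_fst, hσ, Perm.one_apply, PhiMap, ht] at hj
    rw [add_right_comm, add_left_inj] at hj
    exact eq_sub_of_add_eq' hj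
  refine ⟨Multiplicative.toAdd (g.left 0), SemidirectProduct.ext (funext fun j => ?_) hg⟩
  exact Multiplicative.toAdd.injective (rotation_injective m ((hrot j).trans (hrot 0).symm))

theorem exists_eq_upsilon_pow [NeZero m]
    (hscale : ∀ r : ℝ, scale (r : AddCircle (m : ℝ)) = ((2 * Real.pi / m * r : ℝ) : S1))
    {g : Wgrp m q} {p p' : AddCircle (m : ℝ) × (Fin (q + 1) → ℝ)} (hp : p ∈ Lam m q)
    (h : wAct m q g (PhiMap m q scale p) = PhiMap m q scale p') :
    ∃ k : ℕ, g = upsilon m q ^ k := by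
  obtain ⟨a, ha⟩ : ∃ a : ℕ, finRotate (q + 1) ^ a = (g.right : Perm (Fin (q + 1))) :=
    mem_powers_iff_mem_zpowers.mpr g.right.2
  have hright : (g * (upsilon m q ^ a)⁻¹).right = 1 := Subtype.ext <| by
    simp [upsilon_pow_right, ha]
  have h₁ : wAct m q (g * (upsilon m q ^ a)⁻¹) (PhiMap m q scale ((tauMap m q)^[a] p)) =
      PhiMap m q scale p' := by
    rw [phiMap_iterate_tauMap hscale hp, ← wAct_mul, inv_mul_cancel_right, h]
  obtain ⟨b, hb⟩ := eq_inl_of_wAct_phiMap_eq hright h₁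
  refine ⟨(q + 1) * (-b).val + a, ?_⟩
  rw [pow_add, upsilon_pow_mul_succ_self, ZMod.natCast_zmod_val, neg_neg, ← hb,
    inv_mul_cancel_right]

theorem exists_wAct_phiMap_eq [NeZero m] {pr : S1 → CircB m}
    (hpr : ∀ s : ℝ, pr (s : S1) = (s : CircB m))
    (hscale : ∀ r : ℝ, scale (r : AddCircle (m : ℝ)) = ((2 * Real.pi / m * r : ℝ) : S1))
    {x : (Fin (q + 1) → S1) × (Fin (q + 1) → ℝ)} (hx : x ∈ Xn m (q + 1) pr) :
    ∃ (l : Lam m q) (w : Wgrp m q), wAct m q w (PhiMap m q scale l) = x := by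
  have hc := (two_pi_div_pos m).ne'
  obtain ⟨s, hs⟩ := QuotientAddGroup.mk_surjective (x.1 0)
  set t : Fin (q + 1) → ℝ := fun j => x.2 j / (2 * Real.pi / m)
  have hl : (((s / (2 * Real.pi / m) : ℝ) : AddCircle (m : ℝ)), t) ∈ Lam m q :=
    ⟨fun j => div_nonneg (hx.1 j).1 (two_pi_div_pos m).le,
      by rw [← Finset.sum_div, hx.2.2, div_self hc]⟩
  set y := PhiMap m q scale (((s / (2 * Real.pi / m) : ℝ) : AddCircle (m : ℝ)), t)
  have hy2 : y.2 = x.2 := funext fun j => mul_div_cancel₀ _ hc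
  have hy0 : y.1 0 = x.1 0 := by
    rw [phiMap_fst_coe hscale, Fin.sum_Iio_zero, add_zero, mul_div_cancel₀ _ hc, ← hs]
  have hpr_eq := pr_eq_of_mem_Xn hx (mapsTo_phiMap hpr hscale hl) hy2.symm (congrArg pr hy0.symm)
  choose a ha using fun j => exists_eq_add_rotation_of_pr_eq hpr (hpr_eq j)
  refine ⟨⟨_, hl⟩, ⟨fun j => Multiplicative.ofAdd (a j), 1⟩,
    Prod.ext (funext fun j => ?_) (funext fun j => congrFun hy2 j)⟩
  rw [wAct_fst]
  exact (ha j).symm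

end Phi

section BalancedProduct

variable {m q : ℕ}

instance : DiscreteTopology (Wgrp m q) := ⟨rfl⟩

instance [NeZero m] : Finite (Wgrp m q) := Finite.of_equiv _ SemidirectProduct.equivProd.symm

theorem Lam_eq_univ_prod_stdSimplex : Lam m q = univ ×ˢ stdSimplex ℝ (Fin (q + 1)) := by
  ext p
  simp [Lam, stdSimplex]

instance [NeZero m] : CompactSpace (Lam m q) := by
  have : Fact (0 < (m : ℝ)) := ⟨Nat.cast_pos.mpr (NeZero.pos m)⟩
  rw [Lam_eq_univ_prod_stdSimplex, ← isCompact_iff_compactSpace]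
  exact isCompact_univ.prod (isCompact_stdSimplex ℝ _)

theorem mk_eq_mk_iterate (l : Lam m q) (w : Wgrp m q) (k : ℕ) :
    Quot.mk (balRel m q) (l, w) =
      Quot.mk _ ((mapsTo_tauMap.restrict _ _ _)^[k] l, w * (upsilon m q)⁻¹ ^ k) := by
  induction k generalizing l w with
  | zero => simp
  | succ k ih =>
    rw [Quot.sound (show balRel m q (l, w) (mapsTo_tauMap.restrict _ _ _ l, w * (upsilon m q)⁻¹)
      from ⟨rfl, rfl⟩), ih, Function.iterate_succ_apply, pow_succ', mul_assoc]

variable {scale : AddCircle (m : ℝ) → S1} {pr : S1 → CircB m} [NeZero m]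

def balancedMap (hpr : ∀ s : ℝ, pr (s : S1) = (s : CircB m))
    (hscale : ∀ r : ℝ, scale (r : AddCircle (m : ℝ)) = ((2 * Real.pi / m * r : ℝ) : S1)) :
    Quot (balRel m q) → Xn m (q + 1) pr :=
  Quot.lift (fun p => ⟨wAct m q p.2 (PhiMap m q scale p.1),
      wAct_mem hpr p.2 (mapsTo_phiMap hpr hscale p.1.2)⟩)
    fun p p' h => Subtype.ext <| by
      simp only [h.1, h.2, phiMap_tauMap hscale p.1.2, ← wAct_mul, inv_mul_cancel_right]

variable (hpr : ∀ s : ℝ, pr (s : S1) = (s : CircB m))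
  (hscale : ∀ r : ℝ, scale (r : AddCircle (m : ℝ)) = ((2 * Real.pi / m * r : ℝ) : S1))

theorem continuous_balancedMap : Continuous (balancedMap (q := q) hpr hscale) :=
  continuous_quot_lift _ <| Continuous.subtype_mk (continuous_prod_of_discrete_right.mpr
    fun w => (continuous_wAct w).comp ((continuous_phiMap hscale).comp continuous_subtype_val)) _

theorem balancedMap_injective : Function.Injective (balancedMap (q := q) hpr hscale) := by
  intro x x' h
  induction x using Quot.ind with | mk p =>
  induction x' using Quot.ind with | mk p' =>
  obtain ⟨l, w⟩ := p
  obtain ⟨l', w'⟩ := p'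
  have hval : wAct m q w (PhiMap m q scale l) = wAct m q w' (PhiMap m q scale l') :=
    congrArg Subtype.val h
  have h' : wAct m q (w'⁻¹ * w) (PhiMap m q scale l) = PhiMap m q scale l' := by
    rw [wAct_mul, hval, ← wAct_mul, inv_mul_cancel, wAct_one]
  obtain ⟨k, hk⟩ := exists_eq_upsilon_pow hscale l.2 h'
  have hl : (mapsTo_tauMap.restrict _ _ _)^[k] l = l' := Subtype.ext <| by
    rw [MapsTo.coe_iterate_restrict]
    exact phiMap_injective hscale (by rw [phiMap_iterate_tauMap hscale l.2, ← hk, h'])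
  have hw : w * (upsilon m q)⁻¹ ^ k = w' := by
    rw [inv_pow, ← hk, mul_inv_rev, inv_inv, mul_inv_cancel_left]
  rw [mk_eq_mk_iterate l w k, hl, hw]

theorem balancedMap_surjective : Function.Surjective (balancedMap (q := q) hpr hscale) := by
  rintro ⟨x, hx⟩
  obtain ⟨l, w, h⟩ := exists_wAct_phiMap_eq hpr hscale hx
  exact ⟨Quot.mk _ (l, w), Subtype.ext h⟩

def balancedHomeomorph : Quot (balRel m q) ≃ₜ Xn m (q + 1) pr :=
  (continuous_balancedMap hpr hscale).homeoOfEquivCompactToT2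
    (f := .ofBijective _ ⟨balancedMap_injective hpr hscale, balancedMap_surjective hpr hscale⟩)

theorem balancedHomeomorph_mk (l : Lam m q) (w : Wgrp m q) :
    (balancedHomeomorph hpr hscale (Quot.mk _ (l, w))).val = wAct m q w (PhiMap m q scale l) :=
  rfl

end BalancedProduct

/-- (i) `Φ` is well defined, continuous and injective;
(ii) `Φ ∘ τ = υ · Φ`;  (iii) `(λ, w) ↦ w · Φ(λ)` descends to a homeomorphism from the
balanced product `(Λ × W)/∼` to `X(q+1)` which is equivariant for the left `W`-actions
and intertwines translation in the circle coordinate of `Λ` by `a ∈ ℝ` with simultaneous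
translation of all `ζ_j` by `((2π/m)·a)‾`. -/
theorem stmt_14 (m q : ℕ) (hm : 1 ≤ m)
    (pr : S1 → CircB m) (hpr : ∀ s : ℝ, pr ((s : ℝ) : S1) = ((s : ℝ) : CircB m))
    (scale : AddCircle (m : ℝ) → S1)
    (hscale : ∀ r : ℝ, scale ((r : ℝ) : AddCircle (m : ℝ)) =
      ((2 * Real.pi / m * r : ℝ) : S1)) :
    -- (i)
    (Set.MapsTo (PhiMap m q scale) (Lam m q) (Xn m (q + 1) pr) ∧
      ContinuousOn (PhiMap m q scale) (Lam m q) ∧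
      Set.InjOn (PhiMap m q scale) (Lam m q)) ∧
    -- (ii)
    (∀ p ∈ Lam m q,
      PhiMap m q scale (tauMap m q p) = wAct m q (upsilon m q) (PhiMap m q scale p)) ∧
    -- (iii)
    ∃ e : Quot (balRel m q) ≃ₜ ↥(Xn m (q + 1) pr),
      (∀ (l : ↥(Lam m q)) (w : Wgrp m q),
        (e (Quot.mk _ (l, w))).val = wAct m q w (PhiMap m q scale l.val)) ∧
      (∀ (w' : Wgrp m q) (l : ↥(Lam m q)) (w : Wgrp m q),
        (e (Quot.mk _ (l, w' * w))).val = wAct m q w' (e (Quot.mk _ (l, w))).val) ∧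
      (∀ (a : ℝ) (l : ↥(Lam m q)) (w : Wgrp m q),
        (e (Quot.mk _ (⟨(l.val.1 + ((a : ℝ) : AddCircle (m : ℝ)), l.val.2), l.prop⟩,
            w))).val =
          (fun j => (e (Quot.mk _ (l, w))).val.1 j + ((2 * Real.pi / m * a : ℝ) : S1),
            (e (Quot.mk _ (l, w))).val.2)) := by
  have : NeZero m := NeZero.of_pos hm
  refine ⟨⟨mapsTo_phiMap hpr hscale, (continuous_phiMap hscale).continuousOn,
      (phiMap_injective hscale).injOn⟩, fun p hp => phiMap_tauMap hscale hp,
    balancedHomeomorph hpr hscale, fun l w => rfl, fun w' l w => wAct_mul w' w _,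
    fun a l w => ?_⟩
  simp only [balancedHomeomorph_mk]
  rw [phiMap_add_coe hscale, wAct_add_const]

end Stmt14

end
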